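/- The canonical collection 𝒜_C is complete (an additive system for ℤ) if and only if the Collatz conjecture is true, i.e. if and only if for every positive integer n there exists k ≥ 0 with f_C^k(n) = 1, where f_C(n) = n/2 for even n and f_C(n) = 3n + 1 for odd n. -/
import Mathlib


/-- `prodBases b i = b 0 * b 1 * ⋯ * b (i-1)`. -/
def prodBases (b : ℕ → ℤ) (i : ℕ) : ℤ := ∏ j ∈ Finset.range i, b j

/-- The member sets `A i = (b 0 ⋯ b (i-1)) • T i` of a canonical collection. -/
def memberSet (b : ℕ → ℤ) (T : ℕ → Set ℤ) (i : ℕ) : Set ℤ :=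
  (fun t => prodBases b i * t) '' T i

/-- `a` is a representation of `n` in the collection `A`. -/
def IsRepr (A : ℕ → Set ℤ) (n : ℤ) (a : ℕ → ℤ) : Prop :=
  (∀ i, a i ∈ A i) ∧ (Function.support a).Finite ∧ n = ∑ᶠ i, a i

/-- The bases of the canonical collection `𝒜_C`: `b_i = 4^(i+1)`. -/
def bC (i : ℕ) : ℤ := 4 ^ (i + 1)

/-- The modified Collatz map: `g 0 = 0`, `g 1 = 0`, `g j = j/2` for even `j`,
and `g j = 3j + 1` for odd `j > 1`. -/
def gC (j : ℤ) : ℤ := if j = 1 then 0 else if 2 ∣ j then j / 2 else 3 * j + 1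

/-- The residue sets of `𝒜_C`: `T_i = {j - b_i · g(j) : 0 ≤ j < b_i}`. -/
def TColl (i : ℕ) : Set ℤ := (fun j => j - bC i * gC j) '' Set.Ico 0 (bC i)

/-- The Collatz map on `ℕ`. -/
def collatz (n : ℕ) : ℕ := if n % 2 = 0 then n / 2 else 3 * n + 1

namespace ACaux

/-- The residue map of the canonical system. -/
def tC (i : ℕ) (n : ℤ) : ℤ := n % bC i - bC i * gC (n % bC i)

/-- The canonical-system map `f_i`. -/
def fCm (i : ℕ) (n : ℤ) : ℤ := n / bC i + gC (n % bC i)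

/-- The orbit of `n` under the canonical-system maps. -/
def seqC (n : ℤ) : ℕ → ℤ
  | 0 => n
  | i + 1 => fCm i (seqC n i)

/-- The canonical (greedy) representation of `n`. -/
def aOf (n : ℤ) (i : ℕ) : ℤ := prodBases bC i * tC i (seqC n i)

lemma bC_pos (i : ℕ) : 0 < bC i := by unfold bC; positivity

lemma four_le_bC (i : ℕ) : 4 ≤ bC i := le_self_pow₀ (by norm_num) (by omega)

lemma bC_succ (i : ℕ) : bC (i + 1) = 4 * bC i := by
  unfold bC; rw [pow_succ]; ring

lemma two_dvd_bC (i : ℕ) : 2 ∣ bC i := ⟨2 * 4 ^ i, by unfold bC; rw [pow_succ]; ring⟩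

lemma prodBases_zero : prodBases bC 0 = 1 := by simp [prodBases]

lemma prodBases_succ (i : ℕ) : prodBases bC (i + 1) = prodBases bC i * bC i :=
  Finset.prod_range_succ bC i

lemma prodBases_pos (i : ℕ) : 0 < prodBases bC i :=
  Finset.prod_pos fun j _ => bC_pos j

lemma prodBases_dvd {i j : ℕ} (h : i ≤ j) : prodBases bC i ∣ prodBases bC j :=
  Finset.prod_dvd_prod_of_subset _ _ bC (Finset.range_subset_range.mpr h)

lemma gC_zero : gC 0 = 0 := by norm_num [gC]

lemma gC_one : gC 1 = 0 := by norm_num [gC]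

lemma gC_nonneg {r : ℤ} (h : 0 ≤ r) : 0 ≤ gC r := by
  unfold gC
  split_ifs with h1 h2
  · exact le_refl 0
  · exact Int.ediv_nonneg h (by norm_num)
  · linarith

lemma gC_le {r b : ℤ} (h0 : 0 ≤ r) (h : r < b) : gC r ≤ 3 * b - 2 := by
  unfold gC
  split_ifs with h1 h2
  · linarith
  · have := Int.ediv_le_self 2 h0
    linarith
  · linarith

/-- Key identity: `b_i * f_i(n) + t_i(n) = n`. -/
lemma key (i : ℕ) (n : ℤ) : bC i * fCm i n + tC i n = n := by
  have := Int.mul_ediv_add_emod n (bC i)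
  unfold fCm tC
  ring_nf
  ring_nf at this
  linarith

lemma emod_nonneg' (i : ℕ) (n : ℤ) : 0 ≤ n % bC i :=
  Int.emod_nonneg n (ne_of_gt (bC_pos i))

lemma emod_lt' (i : ℕ) (n : ℤ) : n % bC i < bC i :=
  Int.emod_lt_of_pos n (bC_pos i)

lemma tC_mem (i : ℕ) (n : ℤ) : tC i n ∈ TColl i :=
  ⟨n % bC i, ⟨emod_nonneg' i n, emod_lt' i n⟩, rfl⟩

lemma tC_eq_of_mem {i : ℕ} {τ s : ℤ} (hτ : τ ∈ TColl i) (h : τ % bC i = s % bC i) :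
    τ = tC i s := by
  obtain ⟨j, ⟨hj0, hjb⟩, rfl⟩ := hτ
  have h1 : (j - bC i * gC j) % bC i = j % bC i := by
    simp [Int.sub_emod, Int.mul_emod_right]
  have h2 : j % bC i = j := Int.emod_eq_of_lt hj0 hjb
  have h3 : j = s % bC i := by rw [← h2, ← h1, h]
  unfold tC
  rw [← h3]

lemma tC_zero (i : ℕ) : tC i 0 = 0 := by
  unfold tC
  rw [Int.zero_emod, gC_zero]
  ring

lemma fCm_zero (i : ℕ) : fCm i 0 = 0 := by
  unfold fCm
  rw [Int.zero_emod, Int.zero_ediv, gC_zero]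
  norm_num

lemma seqC_zero_persist {n : ℤ} {i : ℕ} (h : seqC n i = 0) :
    ∀ j, i ≤ j → seqC n j = 0 := by
  intro j hj
  induction j with
  | zero =>
    have : i = 0 := Nat.le_zero.mp hj
    subst this
    exact h
  | succ k ih =>
    rcases Nat.lt_or_ge i (k + 1) with hk | hk
    · have : seqC n k = 0 := ih (by omega)
      show fCm k (seqC n k) = 0
      rw [this, fCm_zero]
    · have : i = k + 1 := by omega
      rw [← this]; exact h

/-- Partial-sum identity for the greedy representation. -/
lemma partial_sum (n : ℤ) (i : ℕ) :
    n = (∑ j ∈ Finset.range i, aOf n j) + prodBases bC i * seqC n i := by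
  induction i with
  | zero => simp [prodBases_zero, seqC]
  | succ k ih =>
    rw [Finset.sum_range_succ, prodBases_succ]
    have hk : bC k * fCm k (seqC n k) + tC k (seqC n k) = seqC n k := key k (seqC n k)
    have : seqC n (k + 1) = fCm k (seqC n k) := rfl
    rw [this]
    have hexp : prodBases bC k * seqC n k
        = prodBases bC k * bC k * fCm k (seqC n k) + aOf n k := by
      unfold aOf
      linear_combination (prodBases bC k) * hk.symm
    linarith [ih, hexp]

/-- If the orbit reaches 0, the greedy sequence is a representation. -/
lemma isRepr_of_orbit {n : ℤ} {i : ℕ} (h : seqC n i = 0) :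
    IsRepr (memberSet bC TColl) n (aOf n) := by
  have hzero : ∀ j, i ≤ j → aOf n j = 0 := by
    intro j hj
    unfold aOf
    rw [seqC_zero_persist h j hj, tC_zero, mul_zero]
  refine ⟨fun j => ⟨tC j (seqC n j), tC_mem j _, rfl⟩, ?_, ?_⟩
  · apply Set.Finite.subset (Set.finite_Iio i)
    intro j hj
    simp only [Set.mem_Iio]
    by_contra hij
    exact hj (hzero j (by omega))
  · have hsub : Function.support (aOf n) ⊆ (Finset.range i : Finset ℕ) := by
      intro j hj
      simp only [Finset.coe_range, Set.mem_Iio]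
      by_contra hij
      exact hj (hzero j (by omega))
    rw [finsum_eq_sum_of_support_subset _ hsub]
    have := partial_sum n i
    rw [h, mul_zero, add_zero] at this
    exact this

/-- Any representation agrees with the greedy one, step by step. -/
lemma repr_forced {n : ℤ} {a : ℕ → ℤ} (ha : IsRepr (memberSet bC TColl) n a)
    {N : ℕ} (hsum : n = ∑ j ∈ Finset.range N, a j) :
    ∀ i, i ≤ N →
      (∀ j, j < i → a j = aOf n j) ∧
        ∑ j ∈ Finset.Ico i N, a j = prodBases bC i * seqC n i := by
  intro i
  induction i with
  | zero =>
    intro _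
    refine ⟨fun j hj => absurd hj (by omega), ?_⟩
    rw [← Finset.range_eq_Ico, prodBases_zero, one_mul]
    exact hsum.symm
  | succ k ih =>
    intro hk
    obtain ⟨hprev, hIco⟩ := ih (by omega)
    -- decompose each a j as prodBases * τ_j
    have hmem := ha.1
    choose τ hτmem hτeq using fun j => (hmem j : a j ∈ memberSet bC TColl j)
    -- tail sum divisible by prodBases (k+1)
    have hdvd : prodBases bC (k + 1) ∣ ∑ j ∈ Finset.Ico (k + 1) N, a j := by
      apply Finset.dvd_sum
      intro j hj
      rw [← hτeq j]
      exact Dvd.dvd.mul_right (prodBases_dvd (Finset.mem_Ico.mp hj).1) _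
    obtain ⟨c, hc⟩ := hdvd
    have hsplit : a k + ∑ j ∈ Finset.Ico (k + 1) N, a j = prodBases bC k * seqC n k := by
      rw [← hIco, ← Finset.sum_eq_sum_Ico_succ_bot (by omega : k < N) a]
    -- cancel prodBases k
    have hPk : prodBases bC k ≠ 0 := ne_of_gt (prodBases_pos k)
    have hak : a k = prodBases bC k * τ k := (hτeq k).symm
    have hcancel : τ k + bC k * c = seqC n k := by
      have h1 : prodBases bC k * (τ k + bC k * c) = prodBases bC k * seqC n k := by
        rw [← hsplit, hak, hc, prodBases_succ]; ring
      exact mul_left_cancel₀ hPk h1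
    have hτk : τ k = tC k (seqC n k) := by
      apply tC_eq_of_mem (hτmem k)
      rw [← hcancel]
      simp [Int.add_mul_emod_self_left]
    have hakeq : a k = aOf n k := by rw [hak, hτk]; rfl
    constructor
    · intro j hj
      rcases Nat.lt_or_ge j k with h | h
      · exact hprev j h
      · have : j = k := by omega
        rw [this]; exact hakeq
    · have hkey : bC k * fCm k (seqC n k) + tC k (seqC n k) = seqC n k := key k (seqC n k)
      have hs : seqC n (k + 1) = fCm k (seqC n k) := rfl
      have h2 : ∑ j ∈ Finset.Ico (k + 1) N, a j
          = prodBases bC k * seqC n k - a k := by linarith [hsplit]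
      rw [h2, hakeq, prodBases_succ, hs]
      unfold aOf
      have hexp : prodBases bC k * seqC n k
          = prodBases bC k * bC k * fCm k (seqC n k)
            + prodBases bC k * tC k (seqC n k) := by
        linear_combination (prodBases bC k) * hkey.symm
      linarith [hexp]

/-- Any representation forces the orbit to reach 0, and equals the greedy one. -/
lemma repr_unique {n : ℤ} {a : ℕ → ℤ} (ha : IsRepr (memberSet bC TColl) n a) :
    a = aOf n ∧ ∃ i, seqC n i = 0 := by
  obtain ⟨hmem, hfin, hn⟩ := ha
  set N : ℕ := hfin.toFinset.sup id + 1 with hN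
  have hNsupp : ∀ j, N ≤ j → a j = 0 := by
    intro j hj
    by_contra hja
    have : j ∈ hfin.toFinset := hfin.mem_toFinset.mpr hja
    have := Finset.le_sup (f := id) this
    simp only [id] at this
    omega
  have hsub : Function.support a ⊆ (Finset.range N : Finset ℕ) := by
    intro j hj
    simp only [Finset.coe_range, Set.mem_Iio]
    by_contra h
    exact hj (hNsupp j (by omega))
  have hsum : n = ∑ j ∈ Finset.range N, a j := by
    rw [hn, finsum_eq_sum_of_support_subset _ hsub]
  obtain ⟨hall, hIco⟩ := repr_forced ⟨hmem, hfin, hn⟩ hsum N le_rfl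
  have hsN : seqC n N = 0 := by
    have : (0 : ℤ) = prodBases bC N * seqC n N := by
      rw [← hIco]; simp
    have hPN := prodBases_pos N
    nlinarith [this, hPN, sq_nonneg (seqC n N)]
  refine ⟨?_, ⟨N, hsN⟩⟩
  funext j
  rcases Nat.lt_or_ge j N with h | h
  · exact hall j h
  · rw [hNsupp j h]
    unfold aOf
    rw [seqC_zero_persist hsN j h, tC_zero, mul_zero]

/-- Completeness is equivalent to: every orbit reaches `0`. -/
lemma complete_iff_orbit :
    (∀ n : ℤ, ∃! a : ℕ → ℤ, IsRepr (memberSet bC TColl) n a) ↔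
      ∀ n : ℤ, ∃ i, seqC n i = 0 := by
  constructor
  · intro h n
    obtain ⟨a, ha, -⟩ := h n
    exact (repr_unique ha).2
  · intro h n
    obtain ⟨i, hi⟩ := h n
    refine ⟨aOf n, isRepr_of_orbit hi, ?_⟩
    intro a ha
    exact (repr_unique ha).1

/-! ### The Collatz side -/

lemma gC_eq_collatz {n : ℕ} (h : 2 ≤ n) : gC (n : ℤ) = (collatz n : ℤ) := by
  unfold gC collatz
  rcases Nat.even_or_odd n with he | ho
  · obtain ⟨m, hm⟩ := he
    subst hm
    have h1 : ((m + m : ℕ) : ℤ) ≠ 1 := by push_cast; omega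
    have h2 : (2 : ℤ) ∣ ((m + m : ℕ) : ℤ) := by push_cast; omega
    rw [if_neg h1, if_pos h2, if_pos (by omega)]
    push_cast
    omega
  · obtain ⟨m, hm⟩ := ho
    subst hm
    have h1 : ((2 * m + 1 : ℕ) : ℤ) ≠ 1 := by push_cast; omega
    have h2 : ¬ (2 : ℤ) ∣ ((2 * m + 1 : ℕ) : ℤ) := by push_cast; omega
    rw [if_neg h1, if_neg h2, if_neg (by omega)]
    push_cast
    ring

lemma collatz_pos {n : ℕ} (h : 0 < n) : 0 < collatz n := by
  unfold collatz
  split_ifs with he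
  · omega
  · omega

lemma collatz_to_g : ∀ k (n : ℕ), 0 < n → collatz^[k] n = 1 → ∃ m, gC^[m] (n : ℤ) = 0 := by
  intro k
  induction k with
  | zero =>
    intro n _ h
    simp only [Function.iterate_zero, id] at h
    subst h
    exact ⟨1, by simp [gC_one]⟩
  | succ k ih =>
    intro n hn h
    rcases eq_or_ne n 1 with rfl | hne
    · exact ⟨1, by simp [gC_one]⟩
    · have h2 : 2 ≤ n := by omega
      rw [Function.iterate_succ_apply] at h
      obtain ⟨m, hm⟩ := ih (collatz n) (collatz_pos hn) h
      refine ⟨m + 1, ?_⟩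
      rw [Function.iterate_succ_apply, gC_eq_collatz h2, hm]

lemma g_to_collatz : ∀ m (n : ℕ), 0 < n → gC^[m] (n : ℤ) = 0 → ∃ k, collatz^[k] n = 1 := by
  intro m
  induction m with
  | zero =>
    intro n hn h
    simp only [Function.iterate_zero, id] at h
    omega
  | succ m ih =>
    intro n hn h
    rcases eq_or_ne n 1 with rfl | hne
    · exact ⟨0, rfl⟩
    · have h2 : 2 ≤ n := by omega
      rw [Function.iterate_succ_apply, gC_eq_collatz h2] at h
      obtain ⟨k, hk⟩ := ih (collatz n) (collatz_pos hn) h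
      exact ⟨k + 1, by rw [Function.iterate_succ_apply, hk]⟩

/-! ### Orbit analysis -/

/-- In the "good region" `0 ≤ s < b_i`, the map `f_i` is exactly `gC`. -/
lemma good_step {i : ℕ} {s : ℤ} (h0 : 0 ≤ s) (h1 : s < bC i) :
    fCm i s = gC s ∧ 0 ≤ fCm i s ∧ fCm i s < bC (i + 1) := by
  have hmod : s % bC i = s := Int.emod_eq_of_lt h0 h1
  have hdiv : s / bC i = 0 := Int.ediv_eq_zero_of_lt h0 h1
  have heq : fCm i s = gC s := by unfold fCm; rw [hmod, hdiv, zero_add]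
  refine ⟨heq, ?_, ?_⟩
  · rw [heq]; exact gC_nonneg h0
  · rw [heq, bC_succ]
    have := gC_le h0 h1
    linarith

lemma good_orbit {n : ℤ} {i : ℕ} (h0 : 0 ≤ seqC n i) (h1 : seqC n i < bC i) :
    ∀ k, seqC n (i + k) = gC^[k] (seqC n i) ∧
      0 ≤ seqC n (i + k) ∧ seqC n (i + k) < bC (i + k) := by
  intro k
  induction k with
  | zero => exact ⟨rfl, h0, h1⟩
  | succ k ih =>
    obtain ⟨heq, hk0, hk1⟩ := ih
    obtain ⟨hstep, hs0, hs1⟩ := good_step hk0 hk1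
    have h1 : seqC n (i + (k + 1)) = fCm (i + k) (seqC n (i + k)) := rfl
    refine ⟨?_, ?_, ?_⟩
    · rw [h1, hstep, Function.iterate_succ_apply', heq]
    · rw [h1]; exact hs0
    · rw [h1]; exact hs1

/-- Step of the bounded invariant. -/
lemma inv_step {i : ℕ} {s : ℤ} (h0 : -bC i ≤ s) (h1 : s ≤ bC i ^ 2) :
    -1 ≤ fCm i s ∧ fCm i s < bC (i + 1) := by
  have hb := bC_pos i
  have hg0 := gC_nonneg (emod_nonneg' i s)
  have hg1 := gC_le (emod_nonneg' i s) (emod_lt' i s)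
  have hdivlo : -1 ≤ s / bC i := by
    rw [Int.le_ediv_iff_mul_le hb]
    linarith
  have hdivhi : s / bC i ≤ bC i := by
    have h2 : s / bC i ≤ bC i ^ 2 / bC i := Int.ediv_le_ediv hb h1
    have h3 : bC i ^ 2 / bC i = bC i := by
      rw [sq]; exact Int.mul_ediv_cancel_left _ (ne_of_gt hb)
    linarith [h2, h3.le, h3.ge]
  constructor
  · unfold fCm; linarith
  · unfold fCm; rw [bC_succ]; linarith

/-- The value of `f_i` at `-1`. -/
lemma fCm_neg_one (i : ℕ) : fCm i (-1) = 3 * bC i - 3 := by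
  have hb4 := four_le_bC i
  have hb := bC_pos i
  have hmod : (-1 : ℤ) % bC i = bC i - 1 := by
    have h1 : (-1 : ℤ) % bC i = (-1 + bC i * 1) % bC i := (Int.add_mul_emod_self_left ..).symm
    have h2 : (-1 : ℤ) + bC i * 1 = bC i - 1 := by ring
    rw [h1, h2]
    exact Int.emod_eq_of_lt (by linarith) (by linarith)
  have hdiv : (-1 : ℤ) / bC i = -1 := by
    have h2 := Int.mul_ediv_add_emod (-1 : ℤ) (bC i)
    rw [hmod] at h2
    have h3 : bC i * ((-1 : ℤ) / bC i) = bC i * (-1) := by linarith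
    exact mul_left_cancel₀ (ne_of_gt hb) h3
  have h2d := two_dvd_bC i
  have hg : gC (bC i - 1) = 3 * (bC i - 1) + 1 := by
    unfold gC
    rw [if_neg (by omega), if_neg (by omega)]
  unfold fCm
  rw [hmod, hdiv, hg]
  ring

/-- Lower bound on orbits. -/
lemma orbit_lower (n : ℤ) : ∀ i, -(|n| + 1) ≤ seqC n i := by
  intro i
  induction i with
  | zero => have := abs_nonneg n; have := neg_abs_le n; simpa [seqC] using by linarith
  | succ k ih =>
    have hb := bC_pos k
    have hg0 := gC_nonneg (emod_nonneg' k (seqC n k))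
    have hA : (0 : ℤ) ≤ |n| := abs_nonneg n
    have hdiv : -(|n| + 1) ≤ seqC n k / bC k := by
      rw [Int.le_ediv_iff_mul_le hb]
      nlinarith
    show -(|n| + 1) ≤ fCm k (seqC n k)
    unfold fCm
    linarith

/-- Upper bound on orbits. -/
lemma orbit_upper (n : ℤ) : ∀ i, seqC n i ≤ |n| + 4 ^ (i + 2) := by
  intro i
  induction i with
  | zero =>
    have := le_abs_self n
    show n ≤ |n| + 4 ^ 2
    linarith [this]
  | succ k ih =>
    have hb := bC_pos k
    have hA : (0 : ℤ) ≤ |n| := abs_nonneg n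
    have hg1 := gC_le (emod_nonneg' k (seqC n k)) (emod_lt' k (seqC n k))
    have hbval : bC k = 4 ^ (k + 1) := rfl
    have hdiv : seqC n k / bC k ≤ |n| + 4 := by
      have h1 : seqC n k ≤ (|n| + 4) * bC k := by
        have h4 : (4 : ℤ) ^ (k + 2) = 4 * 4 ^ (k + 1) := by rw [pow_succ]; ring
        have hb1 : (1 : ℤ) ≤ bC k := by linarith [four_le_bC k]
        rw [hbval] at *
        nlinarith [ih]
      calc seqC n k / bC k ≤ (|n| + 4) * bC k / bC k := Int.ediv_le_ediv hb h1
        _ = |n| + 4 := Int.mul_ediv_cancel _ (ne_of_gt hb)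
    show fCm k (seqC n k) ≤ |n| + 4 ^ (k + 1 + 2)
    unfold fCm
    have hbig : (4 : ℤ) ^ (k + 1 + 2) = 16 * bC k := by
      rw [hbval, pow_add]; ring
    have hb4 := four_le_bC k
    linarith [hdiv, hg1]

lemma nat_le_four_pow (m : ℕ) : (m : ℤ) ≤ 4 ^ m := by
  induction m with
  | zero => norm_num
  | succ k ih =>
    have h : (0 : ℤ) < 4 ^ k := pow_pos (by norm_num) k
    push_cast
    rw [pow_succ]
    push_cast at ih
    nlinarith

/-- Every orbit eventually enters the good region. -/
lemma enters_good_region (n : ℤ) : ∃ i, 0 ≤ seqC n i ∧ seqC n i < bC i := by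
  set i0 : ℕ := n.natAbs + 1 with hi0
  have hA : |n| = (n.natAbs : ℤ) := Int.abs_eq_natAbs n
  have hA4 : |n| ≤ 4 ^ n.natAbs := by rw [hA]; exact nat_le_four_pow n.natAbs
  have h4mono : (4 : ℤ) ^ n.natAbs ≤ 4 ^ i0 := pow_le_pow_right₀ (by norm_num) (by omega)
  have hb : bC i0 = 4 ^ (i0 + 1) := rfl
  have hpow : (4 : ℤ) ^ (i0 + 1) = 4 * 4 ^ i0 := by rw [pow_succ]; ring
  have h4pos : (0 : ℤ) < 4 ^ i0 := pow_pos (by norm_num) i0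
  -- invariant at i0
  have hlow : -bC i0 ≤ seqC n i0 := by
    have h1 := orbit_lower n i0
    have : |n| + 1 ≤ bC i0 := by rw [hb, hpow]; linarith
    linarith
  have hhigh : seqC n i0 ≤ bC i0 ^ 2 := by
    have h1 := orbit_upper n i0
    have h2 : (4 : ℤ) ^ (i0 + 2) = 16 * 4 ^ i0 := by
      rw [show i0 + 2 = i0 + 1 + 1 by ring, pow_succ, hpow]; ring
    have h3 : bC i0 ^ 2 = 16 * (4 ^ i0 * 4 ^ i0) := by
      rw [hb, hpow]; ring
    have h4 : (4 : ℤ) ^ i0 ≥ 4 := by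
      calc (4 : ℤ) ^ i0 ≥ 4 ^ 1 := pow_le_pow_right₀ (by norm_num) (by omega)
        _ = 4 := by norm_num
    have h5 : 4 * 4 ^ i0 ≤ (4:ℤ) ^ i0 * 4 ^ i0 :=
      mul_le_mul_of_nonneg_right h4 (le_of_lt h4pos)
    nlinarith [h1, h2, h3, h4, h5]
  obtain ⟨hs1, hs2⟩ := inv_step hlow hhigh
  have hstep1 : seqC n (i0 + 1) = fCm i0 (seqC n i0) := rfl
  rw [← hstep1] at hs1 hs2
  rcases le_or_gt 0 (seqC n (i0 + 1)) with hpos | hneg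
  · exact ⟨i0 + 1, hpos, hs2⟩
  · have hm1 : seqC n (i0 + 1) = -1 := by omega
    have hstep2 : seqC n (i0 + 2) = fCm (i0 + 1) (seqC n (i0 + 1)) := rfl
    rw [hm1, fCm_neg_one] at hstep2
    refine ⟨i0 + 2, ?_, ?_⟩
    · rw [hstep2]; linarith [four_le_bC (i0 + 1)]
    · rw [hstep2]
      have hb2 : bC (i0 + 2) = 4 * bC (i0 + 1) := bC_succ (i0 + 1)
      linarith [bC_pos (i0 + 1)]

/-! ### Main assembly -/

lemma orbit_iff_collatz :
    (∀ n : ℤ, ∃ i, seqC n i = 0) ↔ (∀ n : ℕ, 0 < n → ∃ k : ℕ, collatz^[k] n = 1) := by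
  constructor
  · -- completeness → Collatz
    intro h n hn
    -- run the orbit of prodBases bC i * n, which reaches n at step i
    set i : ℕ := n with hi
    have hlt : (n : ℤ) < bC i := by
      have h1 : (n : ℤ) ≤ 4 ^ n := nat_le_four_pow n
      have h2 : (4 : ℤ) ^ n < 4 ^ (n + 1) := by
        rw [pow_succ]
        nlinarith [pow_pos (show (0:ℤ) < 4 by norm_num) n]
      calc (n : ℤ) ≤ 4 ^ n := h1
        _ < 4 ^ (n + 1) := h2
    set m : ℤ := prodBases bC i * (n : ℤ) with hm
    -- orbit of m: seqC m j = (∏ k in Ico j i, bC k) * n for j ≤ i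
    have horbit : ∀ j, j ≤ i → seqC m j = (∏ k ∈ Finset.Ico j i, bC k) * (n : ℤ) := by
      intro j
      induction j with
      | zero =>
        intro _
        show m = _
        rw [hm]
        congr 1
        unfold prodBases
        rw [Finset.range_eq_Ico]
      | succ l ih =>
        intro hl
        have hli : l < i := by omega
        have hprev := ih (by omega)
        have hfact : (∏ k ∈ Finset.Ico l i, bC k)
            = bC l * ∏ k ∈ Finset.Ico (l + 1) i, bC k :=
          Finset.prod_eq_prod_Ico_succ_bot hli bC
        have hval : seqC m l = bC l * ((∏ k ∈ Finset.Ico (l + 1) i, bC k) * (n : ℤ)) := by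
          rw [hprev, hfact]; ring
        show fCm l (seqC m l) = _
        unfold fCm
        rw [hval, Int.mul_emod_right, gC_zero, add_zero,
          Int.mul_ediv_cancel_left _ (ne_of_gt (bC_pos l))]
    have hsi : seqC m i = (n : ℤ) := by
      rw [horbit i le_rfl]
      simp
    -- good region at i
    have hg0 : 0 ≤ seqC m i := by rw [hsi]; positivity
    have hg1 : seqC m i < bC i := by rw [hsi]; exact hlt
    obtain ⟨j, hj⟩ := h m
    -- take j' := max j i ≥ i with seqC m j' = 0
    have hj' : seqC m (i + (max j i - i)) = 0 := by
      have : i + (max j i - i) = max j i := by omega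
      rw [this]
      exact seqC_zero_persist hj _ (le_max_left j i)
    obtain ⟨heq, -, -⟩ := good_orbit hg0 hg1 (max j i - i)
    rw [hj', hsi] at heq
    exact g_to_collatz _ n hn heq.symm
  · -- Collatz → completeness
    intro h n
    obtain ⟨i, hi0, hi1⟩ := enters_good_region n
    -- orbit from i is the gC orbit of a nonnegative integer
    rcases eq_or_lt_of_le hi0 with hzero | hpos
    · exact ⟨i, hzero.symm⟩
    · have hnat : seqC n i = ((seqC n i).toNat : ℤ) := (Int.toNat_of_nonneg hi0).symm
      have hpos' : 0 < (seqC n i).toNat := by omega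
      obtain ⟨k, hk⟩ := h (seqC n i).toNat hpos'
      obtain ⟨m, hmz⟩ := collatz_to_g k _ hpos' hk
      obtain ⟨heq, -, -⟩ := good_orbit hi0 hi1 m
      refine ⟨i + m, ?_⟩
      rw [heq, hnat, hmz]

end ACaux

/-- The canonical collection `𝒜_C` is complete (an additive system for `ℤ`) if and
only if the Collatz conjecture holds. -/
theorem AC_complete_iff_collatz :
    (∀ n : ℤ, ∃! a : ℕ → ℤ, IsRepr (memberSet bC TColl) n a) ↔
      (∀ n : ℕ, 0 < n → ∃ k : ℕ, collatz^[k] n = 1) := by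
  rw [ACaux.complete_iff_orbit]
  exact ACaux.orbit_iff_collatz
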